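/- arXiv:1809.03933 — 7 statements merged into one kernel-verified Lean document; each statement's English description precedes it below -/
import Mathlib

section
/- For every real number c > 0 and every natural number n ≥ 1, one has 1/n! = (1/(2π)) ∫_{-∞}^{∞} e^{c + i t} / (c + i t)^{n+1} dt, where the integrand is absolutely integrable over ℝ. -/
/-!
Let `f x = xⁿ e^{-c x}` for `x > 0` and `f x = 0` for `x ≤ 0`. Integration by parts and
induction on `k` give `∫₀^∞ xᵏ e^{-w x} dx = k! / w^{k+1}` for `Re w > 0`, so
`𝓕 f ξ = n! / (c + 2πiξ)^{n+1}`, which is integrable as soon as `n ≥ 1`. Fourier inversion at the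
continuity point `x = 1` then reads `e^{-c} = ∫ e^{2πiξ} n! / (c + 2πiξ)^{n+1} dξ`, and the
substitution `t = 2πξ` gives the formula.
-/

open MeasureTheory Set Filter Complex FourierTransform
open scoped Topology Real Nat

theorem integrableOn_pow_mul_cexp_neg_mul_Ioi {w : ℂ} (hw : 0 < w.re) (k : ℕ) :
    IntegrableOn (fun x : ℝ => (x : ℂ) ^ k * cexp (-(w * x))) (Ioi 0) := by
  have hreal : IntegrableOn (fun x : ℝ => x ^ (k : ℝ) * Real.exp (-w.re * x)) (Ioi 0) := by
    simpa using integrableOn_rpow_mul_exp_neg_mul_rpow (p := 1) (s := k)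
      (by linarith [k.cast_nonneg (α := ℝ)]) zero_lt_one hw
  refine hreal.mono' (by fun_prop) ?_
  filter_upwards [ae_restrict_mem measurableSet_Ioi] with x (hx : 0 < x)
  simp [norm_exp, abs_of_pos hx]

theorem tendsto_pow_mul_cexp_neg_mul_atTop {w : ℂ} (hw : 0 < w.re) (k : ℕ) :
    Tendsto (fun x : ℝ => (x : ℂ) ^ k * cexp (-(w * x))) atTop (𝓝 0) := by
  rw [tendsto_zero_iff_norm_tendsto_zero]
  refine (tendsto_rpow_mul_exp_neg_mul_atTop_nhds_zero k w.re hw).congr' ?_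
  filter_upwards [eventually_ge_atTop 0] with x hx
  simp [norm_exp, abs_of_nonneg hx]

theorem integral_pow_mul_cexp_neg_mul_Ioi {w : ℂ} (hw : 0 < w.re) (k : ℕ) :
    ∫ x in Ioi (0 : ℝ), (x : ℂ) ^ k * cexp (-(w * x)) = k ! / w ^ (k + 1) := by
  have hw0 : w ≠ 0 := fun h => by simp [h] at hw
  induction k with
  | zero => simpa using integral_exp_mul_complex_Ioi (a := -w) (by simpa using hw) 0
  | succ k ih =>
    set v : ℝ → ℂ := fun y => -(cexp (-(w * y)) / w)
    have hu (x : ℝ) : HasDerivAt (fun y : ℝ => (y : ℂ) ^ (k + 1)) ((k + 1) * (x : ℂ) ^ k) x := by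
      simpa using (hasDerivAt_pow (k + 1) (x : ℂ)).comp_ofReal
    have hv (x : ℝ) : HasDerivAt v (cexp (-(w * x))) x := by
      have := (((hasDerivAt_id x).ofReal_comp.const_mul (-w)).cexp).div_const (-w)
      simp only [id, ofReal_one, mul_one, neg_mul, div_neg] at this
      exact this.congr_deriv (by field_simp)
    have hu'v : IntegrableOn (fun x : ℝ => (k + 1) * (x : ℂ) ^ k * v x) (Ioi 0) :=
      IntegrableOn.congr_fun ((integrableOn_pow_mul_cexp_neg_mul_Ioi hw k).const_mul
        (-(k + 1) / w)) (fun x _ => by ring) measurableSet_Ioi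
    have hzero : Tendsto (fun x : ℝ => (x : ℂ) ^ (k + 1) * v x) (𝓝[>] 0) (𝓝 0) := by
      have : Continuous fun x : ℝ => (x : ℂ) ^ (k + 1) * v x := by fun_prop
      simpa using (this.tendsto 0).mono_left nhdsWithin_le_nhds
    have hinfty : Tendsto (fun x : ℝ => (x : ℂ) ^ (k + 1) * v x) atTop (𝓝 0) := by
      have := (tendsto_pow_mul_cexp_neg_mul_atTop hw (k + 1)).const_mul (-w⁻¹)
      rw [mul_zero] at this
      exact this.congr fun x => by ring
    calc ∫ x in Ioi (0 : ℝ), (x : ℂ) ^ (k + 1) * cexp (-(w * x))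
        = (k + 1) / w * ∫ x in Ioi (0 : ℝ), (x : ℂ) ^ k * cexp (-(w * x)) := by
          rw [integral_Ioi_mul_deriv_eq_deriv_mul (fun x _ => hu x) (fun x _ => hv x)
            (integrableOn_pow_mul_cexp_neg_mul_Ioi hw (k + 1)) hu'v hzero hinfty,
            sub_self, zero_sub, ← integral_neg, ← integral_const_mul]
          congr 1 with x
          ring
      _ = (k + 1)! / w ^ (k + 1 + 1) := by
          rw [ih, Nat.factorial_succ]
          push_cast
          field_simp
          ring

theorem fourier_indicator_pow_mul_cexp_neg_mul {w : ℂ} (hw : 0 < w.re) (k : ℕ) (ξ : ℝ) :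
    𝓕 ((Ioi 0).indicator fun x : ℝ => (x : ℂ) ^ k * cexp (-(w * x))) ξ =
      k ! / (w + I * ((2 * π * ξ : ℝ) : ℂ)) ^ (k + 1) := by
  have hw' : 0 < (w + I * ((2 * π * ξ : ℝ) : ℂ)).re := by simpa using hw
  rw [Real.fourier_real_eq_integral_exp_smul, ← integral_pow_mul_cexp_neg_mul_Ioi hw' k,
    ← integral_indicator measurableSet_Ioi]
  congr 1 with x
  by_cases hx : x ∈ Ioi 0
  · simp only [indicator_of_mem hx, smul_eq_mul, mul_left_comm _ ((x : ℂ) ^ k), ← exp_add]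
    push_cast
    ring_nf
  · simp [indicator_of_notMem hx]

theorem integrable_inv_ofReal_add_I_mul_pow {c : ℝ} (hc : 0 < c) {m : ℕ} (hm : 2 ≤ m) :
    Integrable fun t : ℝ => (((c : ℂ) + I * t) ^ m)⁻¹ := by
  obtain ⟨j, rfl⟩ := Nat.exists_eq_add_of_le' hm
  have hne (t : ℝ) : (c : ℂ) + I * t ≠ 0 := fun h => by
    simpa [hc.ne'] using congrArg re h
  have hsq : Integrable fun t : ℝ => (c ^ 2 + t ^ 2)⁻¹ := by
    refine (integrable_inv_one_add_sq.comp_div hc.ne').const_mul (c ^ 2)⁻¹ |>.congr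
      (.of_forall fun t => ?_)
    field_simp
  refine (hsq.const_mul (c ^ j)⁻¹).mono'
    (by fun_prop (disch := exact fun t => pow_ne_zero _ (hne t))) (.of_forall fun t => ?_)
  have hre : c ≤ ‖(c : ℂ) + I * t‖ := by simpa using re_le_norm ((c : ℂ) + I * t)
  have hsq_norm : ‖(c : ℂ) + I * t‖ ^ 2 = c ^ 2 + t ^ 2 := by
    rw [Complex.sq_norm, mul_comm, normSq_add_mul_I]
  rw [norm_inv, norm_pow, pow_add, hsq_norm, ← mul_inv]
  gcongr

theorem integrable_cexp_div_ofReal_add_I_mul_pow {c : ℝ} (hc : 0 < c) {m : ℕ} (hm : 2 ≤ m) :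
    Integrable fun t : ℝ => cexp ((c : ℂ) + I * t) / ((c : ℂ) + I * t) ^ m := by
  simp only [div_eq_mul_inv]
  refine (integrable_inv_ofReal_add_I_mul_pow hc hm).bdd_mul (c := Real.exp c) (by fun_prop)
    (.of_forall fun t => ?_)
  simp [norm_exp]

theorem integral_cexp_div_ofReal_add_I_mul_pow {c : ℝ} (hc : 0 < c) {n : ℕ} (hn : 1 ≤ n) :
    ∫ t : ℝ, cexp ((c : ℂ) + I * t) / ((c : ℂ) + I * t) ^ (n + 1) = 2 * π / n ! := by
  set G : ℝ → ℂ := fun t => cexp ((c : ℂ) + I * t) / ((c : ℂ) + I * t) ^ (n + 1)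
  set f : ℝ → ℂ := (Ioi 0).indicator fun x => (x : ℂ) ^ n * cexp (-(c * x))
  have hcre : 0 < (c : ℂ).re := by simpa using hc
  have hf : Integrable f :=
    (integrable_indicator_iff measurableSet_Ioi).2 (integrableOn_pow_mul_cexp_neg_mul_Ioi hcre n)
  have hFf : 𝓕 f = fun ξ => n ! * (((c : ℂ) + I * ((2 * π * ξ : ℝ) : ℂ)) ^ (n + 1))⁻¹ :=
    funext fun ξ => by rw [fourier_indicator_pow_mul_cexp_neg_mul hcre, div_eq_mul_inv]
  have hFf_int : Integrable (𝓕 f) := by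
    rw [hFf]
    exact ((integrable_inv_ofReal_add_I_mul_pow hc (by omega)).comp_mul_left'
      (by positivity)).const_mul _
  have hf_cont : ContinuousAt f 1 := by
    refine (show Continuous fun x : ℝ => (x : ℂ) ^ n * cexp (-(c * x)) by fun_prop).continuousAt
      |>.congr ?_
    filter_upwards [Ioi_mem_nhds one_pos] with x hx
    simp [f, indicator_of_mem hx]
  have hinv : cexp (-c) = n ! * cexp (-c) * ((2 * π)⁻¹ * ∫ t, G t) :=
    calc cexp (-c) = f 1 := by simp [f]
      _ = 𝓕⁻ (𝓕 f) 1 := (hf.fourierInv_fourier_eq hFf_int hf_cont).symm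
      _ = ∫ ξ : ℝ, n ! * cexp (-c) * G (2 * π * ξ) := by
          rw [Real.fourierInv_eq', hFf]
          congr 1 with ξ
          have hexp : cexp ((2 * π * ξ : ℝ) * I) = cexp (-c) * cexp (c + I * (2 * π * ξ : ℝ)) := by
            rw [← exp_add]
            ring_nf
          simp only [G, smul_eq_mul, div_eq_mul_inv, RCLike.inner_apply, Real.ringHom_apply,
            one_mul, hexp]
          ring
      _ = n ! * cexp (-c) * ((2 * π)⁻¹ * ∫ t, G t) := by
          rw [integral_const_mul, Measure.integral_comp_mul_left, abs_of_pos (by positivity),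
            real_smul]
  have hfac : (n ! : ℂ) ≠ 0 := by exact_mod_cast n.factorial_ne_zero
  push_cast at hinv
  field_simp at hinv ⊢
  exact hinv.symm

/-- For every real `c > 0` and natural `n ≥ 1`,
`1/n! = (1/(2π)) ∫_{-∞}^{∞} exp(c + i t) / (c + i t)^(n+1) dt`,
the integrand being (absolutely) integrable over `ℝ`. -/
theorem reciprocal_factorial_integral (c : ℝ) (hc : 0 < c) (n : ℕ) (hn : 1 ≤ n) :
    Integrable (fun t : ℝ =>
        Complex.exp ((c : ℂ) + Complex.I * (t : ℂ)) /
          ((c : ℂ) + Complex.I * (t : ℂ)) ^ (n + 1)) ∧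
    (1 / (n.factorial : ℂ)) =
      ((2 * Real.pi : ℝ) : ℂ)⁻¹ *
        ∫ t : ℝ,
          Complex.exp ((c : ℂ) + Complex.I * (t : ℂ)) /
            ((c : ℂ) + Complex.I * (t : ℂ)) ^ (n + 1) := by
  refine ⟨integrable_cexp_div_ofReal_add_I_mul_pow hc (by omega), ?_⟩
  rw [integral_cexp_div_ofReal_add_I_mul_pow hc hn]
  push_cast
  field_simp
end

section
/- Let f : ℕ → ℂ, let c > 0 be real, and let z ∈ ℂ be such that the series ∑_{n≥0} |f_n| (|z|/c)^n converges. Then the exponential generating function value ∑_{n≥0} f_n z^n / n! equals lim_{T→∞} (1/(2π)) ∫_{-T}^{T} (e^{c + i t} / (c + i t)) · F(z/(c + i t)) dt, where F(w) = ∑_{n≥0} f_n w^n (this series converges absolutely at every argument z/(c+it) since |z/(c+it)| ≤ |z|/c), and the improper integral is interpreted as the limit of integrals over the symmetric intervals [-T, T]. -/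
/-!
Expanding `F(z/s)` termwise, the integrand is `∑ fₙ zⁿ eˢ/sⁿ⁺¹` with `s = c + it`; the series
converges uniformly on the line `Re s = c`, so the integral over `[-T, T]` is `∑ fₙ zⁿ Jₙ(T)` with
`Jₙ(T) = ∫_{-T}^{T} eˢ/sⁿ⁺¹ dt`. Integration by parts gives `Jₙ(T) - (n+1) Jₙ₊₁(T) → 0`, and
`J₁(∞) = 2π` is Fourier inversion at `x = 1` for `x e^{-cx} 𝟙_{x>0}`, whose Fourier transform is
`(c + 2πiξ)⁻²`. Hence `Jₙ(T) → 2π/n!`, and since `‖Jₙ(T)‖ ≤ C/cⁿ` for large `T`, Tannery's theorem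
moves the limit inside the sum.
-/

open MeasureTheory Filter intervalIntegral Set Complex Topology
open scoped Real Nat FourierTransform

lemma norm_ofReal_add_I_mul_sq (c t : ℝ) : ‖(c : ℂ) + I * t‖ ^ 2 = c ^ 2 + t ^ 2 := by
  rw [mul_comm I, ← normSq_eq_norm_sq, normSq_add_mul_I]

lemma ofReal_add_I_mul_ne_zero {c : ℝ} (hc : c ≠ 0) (t : ℝ) : (c : ℂ) + I * t ≠ 0 := by
  intro h
  exact hc (by simpa using congrArg re h)

lemma le_norm_ofReal_add_I_mul {c : ℝ} (hc : 0 ≤ c) (t : ℝ) : c ≤ ‖(c : ℂ) + I * t‖ := by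
  simpa [abs_of_nonneg hc] using abs_re_le_norm ((c : ℂ) + I * t)

lemma abs_le_norm_ofReal_add_I_mul (c t : ℝ) : |t| ≤ ‖(c : ℂ) + I * t‖ := by
  simpa using abs_im_le_norm ((c : ℂ) + I * t)

lemma integrable_inv_sq_add_sq {c : ℝ} (hc : c ≠ 0) :
    Integrable fun t : ℝ => (c ^ 2 + t ^ 2)⁻¹ := by
  convert (integrable_inv_one_add_sq.comp_div hc).const_mul (c ^ 2)⁻¹ using 2 with t
  field_simp

lemma integrableOn_Ioi_mul_exp_neg_mul {a : ℂ} (ha : 0 < a.re) :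
    IntegrableOn (fun x : ℝ => (x : ℂ) * exp (-(a * x))) (Ioi 0) := by
  refine (integrableOn_rpow_mul_exp_neg_mul_rpow (s := 1) (p := 1) (by norm_num) one_pos ha).mono'
    (by fun_prop : Continuous fun x : ℝ => (x : ℂ) * exp (-(a * x))).aestronglyMeasurable ?_
  filter_upwards [ae_restrict_mem measurableSet_Ioi] with x hx
  simp [norm_exp, abs_of_pos (mem_Ioi.1 hx)]

lemma integral_Ioi_mul_exp_neg_mul {a : ℂ} (ha : 0 < a.re) :
    ∫ x in Ioi (0 : ℝ), (x : ℂ) * exp (-(a * x)) = 1 / a ^ 2 := by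
  have ha0 : a ≠ 0 := by rintro rfl; simp at ha
  have hderiv (x : ℝ) : HasDerivAt (fun x : ℝ => -((x / a + 1 / a ^ 2) * exp (-(a * x))))
      ((x : ℂ) * exp (-(a * x))) x := by
    have hlin : HasDerivAt (fun x : ℝ => -(a * x)) (-a) x := by
      simpa using ((hasDerivAt_id x).ofReal_comp.const_mul a).fun_neg
    refine ((((hasDerivAt_id x).ofReal_comp.div_const a).add_const (1 / a ^ 2)).mul
      hlin.cexp).fun_neg.congr_deriv ?_
    simp only [id, ofReal_one]
    field_simp
    ring
  have hdecay (k : ℕ) : Tendsto (fun x : ℝ => (x : ℂ) ^ k * exp (-(a * x))) atTop (𝓝 0) := by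
    rw [tendsto_zero_iff_norm_tendsto_zero]
    refine (tendsto_rpow_mul_exp_neg_mul_atTop_nhds_zero k a.re ha).congr' ?_
    filter_upwards [eventually_ge_atTop 0] with x hx
    simp [norm_exp, abs_of_nonneg hx]
  have hlim : Tendsto (fun x : ℝ => -((x / a + 1 / a ^ 2) * exp (-(a * x)))) atTop (𝓝 0) := by
    have h := (((hdecay 1).const_mul (1 / a)).add ((hdecay 0).const_mul (1 / a ^ 2))).neg
    rw [mul_zero, mul_zero, add_zero, neg_zero] at h
    refine h.congr fun x => ?_
    ring
  simpa using integral_Ioi_of_hasDerivAt_of_tendsto (hderiv 0).continuousAt.continuousWithinAt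
    (fun x _ => hderiv x) (integrableOn_Ioi_mul_exp_neg_mul ha) hlim

lemma fourier_indicator_mul_exp_neg_mul {a : ℂ} (ha : 0 < a.re) (ξ : ℝ) :
    𝓕 ((Ioi 0).indicator fun x : ℝ => (x : ℂ) * exp (-(a * x))) ξ =
      1 / (a + I * (2 * π * ξ : ℝ)) ^ 2 := by
  rw [Real.fourier_eq',
    ← integral_Ioi_mul_exp_neg_mul (a := a + I * (2 * π * ξ : ℝ)) (by simpa using ha),
    ← MeasureTheory.integral_indicator measurableSet_Ioi]
  congr 1 with x
  simp only [indicator_apply, smul_eq_mul]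
  split_ifs
  · rw [mul_left_comm, ← exp_add]
    congr 2
    simp only [RCLike.inner_apply, Real.ringHom_apply, neg_mul, ofReal_neg, ofReal_mul,
      ofReal_ofNat]
    ring
  · simp

noncomputable def bromwichKernel (c : ℝ) (n : ℕ) (t : ℝ) : ℂ :=
  exp (c + I * t) / (c + I * t) ^ (n + 1)

noncomputable def bromwichIntegral (c : ℝ) (n : ℕ) (T : ℝ) : ℂ :=
  ∫ t in (-T)..T, bromwichKernel c n t

section Bromwich

variable {c : ℝ}

lemma continuous_bromwichKernel (hc : c ≠ 0) (n : ℕ) : Continuous (bromwichKernel c n) :=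
  Continuous.div (by fun_prop) (by fun_prop)
    fun t => pow_ne_zero _ (ofReal_add_I_mul_ne_zero hc t)

lemma norm_bromwichKernel (c : ℝ) (n : ℕ) (t : ℝ) :
    ‖bromwichKernel c n t‖ = Real.exp c / ‖(c : ℂ) + I * t‖ ^ (n + 1) := by
  simp [bromwichKernel, norm_exp]

lemma norm_bromwichKernel_le (hc : 0 < c) (n : ℕ) (t : ℝ) :
    ‖bromwichKernel c n t‖ ≤ Real.exp c / c ^ (n + 1) := by
  rw [norm_bromwichKernel]
  gcongr
  exact le_norm_ofReal_add_I_mul hc.le t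

lemma norm_bromwichKernel_succ_le (hc : 0 < c) (n : ℕ) (t : ℝ) :
    ‖bromwichKernel c (n + 1) t‖ ≤ Real.exp c / c ^ n * (c ^ 2 + t ^ 2)⁻¹ := by
  have hs : 0 < ‖(c : ℂ) + I * t‖ := norm_pos_iff.2 (ofReal_add_I_mul_ne_zero hc.ne' t)
  rw [norm_bromwichKernel, ← norm_ofReal_add_I_mul_sq]
  calc Real.exp c / ‖(c : ℂ) + I * t‖ ^ (n + 1 + 1)
      = Real.exp c / (‖(c : ℂ) + I * t‖ ^ n * ‖(c : ℂ) + I * t‖ ^ 2) := by ring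
    _ ≤ Real.exp c / (c ^ n * ‖(c : ℂ) + I * t‖ ^ 2) := by
      gcongr
      exact le_norm_ofReal_add_I_mul hc.le t
    _ = Real.exp c / c ^ n * (‖(c : ℂ) + I * t‖ ^ 2)⁻¹ := by ring

lemma integrable_bromwichKernel_succ (hc : 0 < c) (n : ℕ) :
    Integrable (bromwichKernel c (n + 1)) :=
  ((integrable_inv_sq_add_sq hc.ne').const_mul _).mono'
    (continuous_bromwichKernel hc.ne' _).aestronglyMeasurable
    (.of_forall (norm_bromwichKernel_succ_le hc n))

lemma norm_bromwichIntegral_succ_le (hc : 0 < c) (n : ℕ) {T : ℝ} (hT : 0 ≤ T) :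
    ‖bromwichIntegral c (n + 1) T‖ ≤ π * Real.exp c / c ^ (n + 1) := by
  have hbound : ‖bromwichIntegral c (n + 1) T‖ ≤
      ∫ t in (-T)..T, Real.exp c / c ^ n * (c ^ 2 + t ^ 2)⁻¹ :=
    norm_integral_le_of_norm_le (by linarith)
      (.of_forall fun t _ => norm_bromwichKernel_succ_le hc n t)
      ((integrable_inv_sq_add_sq hc.ne').const_mul _).intervalIntegrable
  rw [intervalIntegral.integral_const_mul, integral_inv_sq_add_sq hc.ne'] at hbound
  refine hbound.trans ?_
  have harctan : Real.arctan (T / c) - Real.arctan (-T / c) ≤ π := by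
    linarith [Real.arctan_lt_pi_div_two (T / c), Real.neg_pi_div_two_lt_arctan (-T / c)]
  calc Real.exp c / c ^ n * (c⁻¹ * (Real.arctan (T / c) - Real.arctan (-T / c)))
      ≤ Real.exp c / c ^ n * (c⁻¹ * π) := by gcongr
    _ = π * Real.exp c / c ^ (n + 1) := by field_simp; ring

lemma hasDerivAt_bromwichKernel (hc : c ≠ 0) (n : ℕ) (t : ℝ) :
    HasDerivAt (bromwichKernel c n)
      (I * bromwichKernel c n t - (n + 1) * I * bromwichKernel c (n + 1) t) t := by
  have hs : HasDerivAt (fun t : ℝ => (c : ℂ) + I * t) I t := by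
    simpa using ((hasDerivAt_id t).ofReal_comp.const_mul I).const_add (c : ℂ)
  have hne := ofReal_add_I_mul_ne_zero hc t
  refine (hs.cexp.fun_div (hs.fun_pow (n + 1)) (pow_ne_zero _ hne)).congr_deriv ?_
  simp only [bromwichKernel, Nat.add_sub_cancel]
  field_simp
  push_cast
  ring

lemma I_mul_bromwichIntegral_sub_succ (hc : c ≠ 0) (n : ℕ) (T : ℝ) :
    I * (bromwichIntegral c n T - (n + 1) * bromwichIntegral c (n + 1) T) =
      bromwichKernel c n T - bromwichKernel c n (-T) := by
  have hint (m : ℕ) (a : ℂ) :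
      IntervalIntegrable (fun t => a * bromwichKernel c m t) volume (-T) T :=
    (continuous_const.mul (continuous_bromwichKernel hc m)).intervalIntegrable _ _
  rw [← integral_eq_sub_of_hasDerivAt (fun t _ => hasDerivAt_bromwichKernel hc n t)
    ((hint n I).sub (hint (n + 1) _)), integral_sub (hint n I) (hint (n + 1) _),
    intervalIntegral.integral_const_mul, intervalIntegral.integral_const_mul, bromwichIntegral,
    bromwichIntegral]
  ring

lemma tendsto_bromwichKernel_cocompact (c : ℝ) (n : ℕ) :
    Tendsto (bromwichKernel c n) (cocompact ℝ) (𝓝 0) := by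
  have hnorm : Tendsto (fun t : ℝ => ‖(c : ℂ) + I * t‖) (cocompact ℝ) atTop :=
    tendsto_atTop_mono (abs_le_norm_ofReal_add_I_mul c) tendsto_norm_cocompact_atTop
  rw [tendsto_zero_iff_norm_tendsto_zero]
  simp_rw [norm_bromwichKernel]
  exact tendsto_const_nhds.div_atTop ((tendsto_pow_atTop n.succ_ne_zero).comp hnorm)

lemma tendsto_bromwichIntegral_sub_succ (hc : c ≠ 0) (n : ℕ) :
    Tendsto (fun T => bromwichIntegral c n T - (n + 1) * bromwichIntegral c (n + 1) T)
      atTop (𝓝 0) := by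
  have hboundary :
      Tendsto (fun T => bromwichKernel c n T - bromwichKernel c n (-T)) atTop (𝓝 0) := by
    have h := tendsto_bromwichKernel_cocompact c n
    simpa using (h.mono_left atTop_le_cocompact).sub
      (h.comp (tendsto_neg_atTop_atBot.mono_right atBot_le_cocompact))
  convert hboundary.const_mul (-I) using 1
  · ext T
    rw [← I_mul_bromwichIntegral_sub_succ hc, ← mul_assoc, neg_mul, I_mul_I, neg_neg, one_mul]
  · simp

lemma integral_bromwichKernel_one (hc : 0 < c) : ∫ t, bromwichKernel c 1 t = 2 * π := by
  set g := (Ioi 0).indicator fun x : ℝ => (x : ℂ) * exp (-(c * x))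
  set h : ℝ → ℂ := fun t => 1 / ((c : ℂ) + I * t) ^ 2
  have hc' : 0 < (c : ℂ).re := by simpa using hc
  have hπ : 2 * π ≠ 0 := by positivity
  have hg : Integrable g :=
    (integrable_indicator_iff measurableSet_Ioi).2 (integrableOn_Ioi_mul_exp_neg_mul hc')
  have hg_one : ContinuousAt g 1 := by
    have : g =ᶠ[𝓝 1] fun x : ℝ => (x : ℂ) * exp (-(c * x)) :=
      eventually_of_mem (Ioi_mem_nhds one_pos) fun x hx => indicator_of_mem hx _
    exact (by fun_prop : Continuous fun x : ℝ => (x : ℂ) * exp (-(c * x))).continuousAt.congr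
      this.symm
  have hFg : 𝓕 g = fun ξ => h (2 * π * ξ) := funext (fourier_indicator_mul_exp_neg_mul hc')
  have hh : Integrable h := by
    refine (integrable_inv_sq_add_sq hc.ne').mono' ?_ (.of_forall fun t => ?_)
    · exact (continuous_const.div (by fun_prop)
        fun t => pow_ne_zero _ (ofReal_add_I_mul_ne_zero hc.ne' t)).aestronglyMeasurable
    · simp [h, norm_ofReal_add_I_mul_sq]
  have hkernel (ξ : ℝ) : exp (↑(2 * π * inner ℝ ξ (1 : ℝ)) * I) • 𝓕 g ξ =
      exp (-c) * bromwichKernel c 1 (2 * π * ξ) := by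
    rw [hFg, bromwichKernel, smul_eq_mul, ← mul_div_assoc, ← mul_div_assoc, ← exp_add]
    simp only [RCLike.inner_apply, Real.ringHom_apply, one_mul, ofReal_mul, ofReal_ofNat, mul_one,
      neg_add_cancel_left, Nat.reduceAdd]
    ring_nf
  have hinv := hg.fourierInv_fourier_eq (hFg ▸ hh.comp_mul_left' hπ) hg_one
  rw [Real.fourierInv_eq', funext hkernel, MeasureTheory.integral_const_mul,
    Measure.integral_comp_mul_left (bromwichKernel c 1), show g 1 = exp (-c) by simp [g],
    abs_of_pos (by positivity), real_smul] at hinv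
  have hscaled := mul_left_cancel₀ (exp_ne_zero _) (hinv.trans (mul_one _).symm)
  push_cast at hscaled
  field_simp at hscaled
  exact hscaled

lemma tendsto_bromwichIntegral (hc : 0 < c) (n : ℕ) :
    Tendsto (bromwichIntegral c n) atTop (𝓝 (2 * π / n !)) := by
  induction n with
  | zero =>
    have hone : Tendsto (bromwichIntegral c 1) atTop (𝓝 (2 * π)) :=
      integral_bromwichKernel_one hc ▸ intervalIntegral_tendsto_integral
        (integrable_bromwichKernel_succ hc 0) tendsto_neg_atTop_atBot tendsto_id
    convert (tendsto_bromwichIntegral_sub_succ hc.ne' 0).add hone using 1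
    · ext T
      simp
    · simp
  | succ n ih =>
    have hsucc := (ih.sub (tendsto_bromwichIntegral_sub_succ hc.ne' n)).div_const ((n : ℂ) + 1)
    convert hsucc using 1
    · ext T
      field_simp
      ring
    · rw [sub_zero, div_div, Nat.factorial_succ, Nat.cast_mul, Nat.cast_succ,
        mul_comm ((n : ℂ) + 1)]

lemma exists_eventually_norm_bromwichIntegral_le (hc : 0 < c) :
    ∃ C, ∀ᶠ T in atTop, ∀ n, ‖bromwichIntegral c n T‖ ≤ C / c ^ n := by
  refine ⟨max (‖2 * π / (0 ! : ℂ)‖ + 1) (π * Real.exp c), ?_⟩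
  filter_upwards [(tendsto_bromwichIntegral hc 0).norm.eventually
    (eventually_le_nhds (lt_add_one _)), eventually_ge_atTop 0] with T hzero hT n
  -- `J₀` is not absolutely integrable on the whole line, so its bound comes from its limit.
  cases n with
  | zero => simpa using hzero.trans (le_max_left _ _)
  | succ n =>
    exact (norm_bromwichIntegral_succ_le hc n hT).trans (by gcongr; exact le_max_right _ _)

lemma integral_exp_div_mul_tsum_eq_tsum_bromwichIntegral (hc : 0 < c) (f : ℕ → ℂ) (z : ℂ)
    (hsum : Summable fun n => ‖f n‖ * (‖z‖ / c) ^ n) (T : ℝ) :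
    ∫ t in (-T)..T, exp (c + I * t) / (c + I * t) * ∑' n, f n * (z / (c + I * t)) ^ n =
      ∑' n, f n * z ^ n * bromwichIntegral c n T := by
  have hterm (n : ℕ) (t : ℝ) : f n * z ^ n * bromwichKernel c n t =
      exp (c + I * t) / (c + I * t) * (f n * (z / (c + I * t)) ^ n) := by
    have := ofReal_add_I_mul_ne_zero hc.ne' t
    rw [bromwichKernel, div_pow]
    field_simp
    ring
  have hbound (n : ℕ) (t : ℝ) : ‖f n * z ^ n * bromwichKernel c n t‖ ≤
      Real.exp c / c * (‖f n‖ * (‖z‖ / c) ^ n) := by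
    rw [norm_mul, norm_mul, norm_pow]
    calc ‖f n‖ * ‖z‖ ^ n * ‖bromwichKernel c n t‖
        ≤ ‖f n‖ * ‖z‖ ^ n * (Real.exp c / c ^ (n + 1)) := by
          gcongr; exact norm_bromwichKernel_le hc n t
      _ = _ := by rw [div_pow]; field_simp; ring
  have hsum_t (t : ℝ) : Summable fun n => f n * z ^ n * bromwichKernel c n t :=
    (hsum.mul_left _).of_norm_bounded fun n => hbound n t
  simp_rw [bromwichIntegral, ← intervalIntegral.integral_const_mul, ← tsum_mul_left, ← hterm]
  exact (intervalIntegral.hasSum_integral_of_dominated_convergence _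
    (fun n => ((continuous_const.mul (continuous_bromwichKernel hc.ne' n)).aestronglyMeasurable))
    (fun n => .of_forall fun t _ => hbound n t) (.of_forall fun _ _ => hsum.mul_left _)
    intervalIntegrable_const (.of_forall fun t _ => (hsum_t t).hasSum)).tsum_eq.symm

end Bromwich

/-- OGF-to-EGF integral formula I: if `∑ ‖f n‖ (‖z‖/c)^n` converges, then
`∑_{n≥0} f_n z^n / n! = lim_{T→∞} (1/(2π)) ∫_{-T}^{T} (e^{c+it}/(c+it)) F(z/(c+it)) dt`,
where `F(w) = ∑_{n≥0} f_n w^n`. -/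
theorem ogf_to_egf_integral_formula_I (f : ℕ → ℂ) (c : ℝ) (hc : 0 < c) (z : ℂ)
    (hsum : Summable (fun n : ℕ => ‖f n‖ * (‖z‖ / c) ^ n)) :
    Tendsto
      (fun T : ℝ =>
        ((2 * Real.pi : ℝ) : ℂ)⁻¹ *
          ∫ t in (-T)..T,
            (Complex.exp ((c : ℂ) + Complex.I * (t : ℂ)) /
                ((c : ℂ) + Complex.I * (t : ℂ))) *
              ∑' n : ℕ, f n * (z / ((c : ℂ) + Complex.I * (t : ℂ))) ^ n)
      atTop (nhds (∑' n : ℕ, f n * z ^ n / n.factorial)) := by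
  obtain ⟨C, hC⟩ := exists_eventually_norm_bromwichIntegral_le hc
  have htannery : Tendsto (fun T => ∑' n, f n * z ^ n * bromwichIntegral c n T) atTop
      (𝓝 (∑' n, f n * z ^ n * (2 * π / n !))) := by
    refine tendsto_tsum_of_dominated_convergence (hsum.mul_left C)
      (fun n => (tendsto_bromwichIntegral hc n).const_mul _) (hC.mono fun T hT n => ?_)
    rw [norm_mul, norm_mul, norm_pow]
    calc ‖f n‖ * ‖z‖ ^ n * ‖bromwichIntegral c n T‖ ≤ ‖f n‖ * ‖z‖ ^ n * (C / c ^ n) := by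
          gcongr; exact hT n
      _ = _ := by rw [div_pow]; field_simp
  simp_rw [integral_exp_div_mul_tsum_eq_tsum_bromwichIntegral hc f z hsum]
  convert htannery.const_mul ((2 * π : ℝ) : ℂ)⁻¹ using 2
  rw [← tsum_mul_left]
  congr 1 with n
  push_cast
  field_simp
end

section
/- Let f : ℕ → ℂ and let z ∈ ℂ be such that the series ∑_{n≥0} |f_n| |z|^n converges. Then ∑_{n≥0} f_n z^n / n! = (1/(2π)) ∫_{-π}^{π} F(z e^{-i t}) e^{e^{i t}} dt, where F(w) = ∑_{n≥0} f_n w^n. -/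
/-!
Substituting `w = z e^{-it}` termwise, the integrand is `∑ₙ fₙ zⁿ e^{-int} e^{e^{it}}`, and the
absolute convergence of `∑ |fₙ| |z|ⁿ` (with `|e^{e^{it}}| ≤ e`) lets us integrate term by term.
Expanding `e^{e^{it}} = ∑ₘ e^{imt}/m!` and integrating again term by term, orthogonality of the
characters `e^{ikt}` on `[-π, π]` leaves only `m = n`, so `∫ e^{-int} e^{e^{it}} dt = 2π / n!`.
-/

open MeasureTheory intervalIntegral

theorem intervalIntegral.tsum_integral_eq_integral_tsum_of_norm_le {ι E : Type*} [Countable ι]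
    [NormedAddCommGroup E] [NormedSpace ℝ E] [CompleteSpace E] {a b : ℝ} {F : ι → ℝ → E}
    (hF : ∀ i, Continuous (F i)) {u : ι → ℝ} (hu : Summable u) (hle : ∀ i t, ‖F i t‖ ≤ u i) :
    ∑' i, ∫ t in a..b, F i t = ∫ t in a..b, ∑' i, F i t := by
  refine tsum_intervalIntegral_eq_of_summable_norm (f := fun i => ⟨F i, hF i⟩) ?_
  refine hu.of_nonneg_of_le (fun _ => norm_nonneg _) fun i => ?_
  exact (ContinuousMap.norm_le _ ((norm_nonneg _).trans (hle i a))).2 fun t => hle i t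

open Complex

theorem integral_exp_int_mul_I_mul (k : ℤ) :
    ∫ t in (-Real.pi)..Real.pi, exp (I * k * t) = if k = 0 then ((2 * Real.pi : ℝ) : ℂ) else 0 := by
  split_ifs with hk
  · simp [hk, two_mul]
  have hIk : I * k ≠ 0 := by simp [hk]
  have exp_I_mul_pi : ∀ j : ℤ, exp (I * j * Real.pi) = (-1) ^ j := fun j => by
    rw [show I * j * Real.pi = j * (Real.pi * I) by ring, exp_int_mul, exp_pi_mul_I]
  have hneg : exp (I * k * ((-Real.pi : ℝ) : ℂ)) = (-1) ^ k := by
    rw [show I * k * ((-Real.pi : ℝ) : ℂ) = I * (-k : ℤ) * Real.pi by push_cast; ring,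
      exp_I_mul_pi, zpow_neg, ← inv_zpow, inv_neg, inv_one]
  rw [integral_exp_mul_complex hIk, exp_I_mul_pi, hneg, sub_self, zero_div]

theorem norm_exp_exp_I_mul_le (t : ℝ) : ‖exp (exp (I * t))‖ ≤ Real.exp 1 := by
  rw [norm_exp, Real.exp_le_exp, ← norm_exp_I_mul_ofReal t]
  exact re_le_norm _

theorem exp_neg_I_mul_pow_mul_exp_I_mul_pow (n m : ℕ) (t : ℝ) :
    exp (-(I * t)) ^ n * exp (I * t) ^ m = exp (I * ((m - n : ℤ) : ℂ) * t) := by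
  rw [← exp_nat_mul, ← exp_nat_mul, ← exp_add]
  push_cast
  ring_nf

theorem integral_exp_neg_I_mul_pow_mul_exp_exp (n : ℕ) :
    ∫ t in (-Real.pi)..Real.pi, exp (-(I * t)) ^ n * exp (exp (I * t)) =
      ((2 * Real.pi : ℝ) : ℂ) / n.factorial := by
  have hexpand : ∀ t : ℝ, exp (-(I * t)) ^ n * exp (exp (I * t)) =
      ∑' m : ℕ, exp (I * ((m - n : ℤ) : ℂ) * t) / m.factorial := fun t => by
    rw [congrFun (exp_eq_exp_ℂ.trans NormedSpace.exp_eq_tsum_div) (exp (I * t)), ← tsum_mul_left]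
    simp_rw [mul_div_assoc', exp_neg_I_mul_pow_mul_exp_I_mul_pow]
  have hbound : ∀ (m : ℕ) (t : ℝ), ‖exp (I * ((m - n : ℤ) : ℂ) * t) / m.factorial‖ ≤
      (m.factorial : ℝ)⁻¹ := fun m t => by
    rw [norm_div, mul_assoc, ← ofReal_intCast, ← ofReal_mul, norm_exp_I_mul_ofReal]
    simp
  have hsummable : Summable fun m : ℕ => (m.factorial : ℝ)⁻¹ := by
    simpa using Real.summable_pow_div_factorial 1
  rw [integral_congr fun t _ => hexpand t,
    ← tsum_integral_eq_integral_tsum_of_norm_le (fun m => by fun_prop) hsummable hbound,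
    tsum_eq_single n fun m hm => ?_]
  · rw [intervalIntegral.integral_div, integral_exp_int_mul_I_mul, if_pos (sub_self _)]
  · rw [intervalIntegral.integral_div, integral_exp_int_mul_I_mul,
      if_neg (sub_ne_zero.2 (by exact_mod_cast hm)), zero_div]

/-- OGF-to-EGF integral formula II: if `∑ ‖f n‖ ‖z‖^n` converges, then
`∑_{n≥0} f_n z^n / n! = (1/(2π)) ∫_{-π}^{π} F(z e^{-it}) e^{e^{it}} dt`,
where `F(w) = ∑_{n≥0} f_n w^n`. -/
theorem ogf_to_egf_integral_formula_II (f : ℕ → ℂ) (z : ℂ)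
    (hsum : Summable (fun n : ℕ => ‖f n‖ * ‖z‖ ^ n)) :
    ∑' n : ℕ, f n * z ^ n / n.factorial =
      ((2 * Real.pi : ℝ) : ℂ)⁻¹ *
        ∫ t in (-Real.pi)..Real.pi,
          (∑' n : ℕ, f n * (z * Complex.exp (-(Complex.I * (t : ℂ)))) ^ n) *
            Complex.exp (Complex.exp (Complex.I * (t : ℂ))) := by
  have hterm : ∀ n : ℕ, ∫ t in (-Real.pi)..Real.pi,
      f n * (z * exp (-(I * t))) ^ n * exp (exp (I * t)) =
        ((2 * Real.pi : ℝ) : ℂ) * (f n * z ^ n / n.factorial) := fun n => by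
    simp_rw [mul_pow, mul_assoc, intervalIntegral.integral_const_mul,
      integral_exp_neg_I_mul_pow_mul_exp_exp]
    ring
  have hbound : ∀ (n : ℕ) (t : ℝ), ‖f n * (z * exp (-(I * t))) ^ n * exp (exp (I * t))‖ ≤
      ‖f n‖ * ‖z‖ ^ n * Real.exp 1 := fun n t => by
    rw [norm_mul, norm_mul, norm_pow, norm_mul, ← mul_neg, ← ofReal_neg, norm_exp_I_mul_ofReal,
      mul_one]
    gcongr
    exact norm_exp_exp_I_mul_le t
  have h2pi : ((2 * Real.pi : ℝ) : ℂ) ≠ 0 := ofReal_ne_zero.2 Real.two_pi_pos.ne'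
  calc ∑' n : ℕ, f n * z ^ n / n.factorial
      = ((2 * Real.pi : ℝ) : ℂ)⁻¹ * ∑' n : ℕ, ∫ t in (-Real.pi)..Real.pi,
          f n * (z * exp (-(I * t))) ^ n * exp (exp (I * t)) := by
        rw [tsum_congr hterm, tsum_mul_left, inv_mul_cancel_left₀ h2pi]
    _ = _ := by
        rw [tsum_integral_eq_integral_tsum_of_norm_le (fun n => by fun_prop)
          (hsum.mul_right (Real.exp 1)) hbound]
        simp_rw [tsum_mul_right]
end

section
/- Let f : ℕ → ℂ and let z ∈ ℂ be such that the series ∑_{n≥0} |f_n| |z|^n converges. Then ∑_{n≥0} f_n z^n / (2^n · n!) = (1/(2π)) ∫_{-π}^{π} F(z e^{-i t}) e^{(1/2) e^{i t}} dt, where F(w) = ∑_{n≥0} f_n w^n. -/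
/-! Expand `F(z e^{-it}) = ∑ f_n z^n e^{-int}` and `exp(e^{it}/2) = ∑ e^{imt} / (2^m m!)`.
Both series converge absolutely, uniformly in `t`, so the integral of their product may be taken
term by term over pairs `(n, m)`. By orthogonality of the characters `e^{ikt}` on `[-π, π]`, only
the diagonal `n = m` survives, and it contributes `2π f_n z^n / (2^n n!)`. -/

section

open Complex Real

theorem integral_exp_int_mul_I (k : ℤ) :
    ∫ t in (-π)..π, cexp (k * I * t) = if k = 0 then ((2 * π : ℝ) : ℂ) else 0 := by
  split_ifs with hk
  · simp [hk, two_mul]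
  · have hkI : (k : ℂ) * I ≠ 0 := mul_ne_zero (Int.cast_ne_zero.mpr hk) I_ne_zero
    have hperiod : cexp (k * I * π) = cexp (k * I * (-π : ℝ)) := by
      rw [← mul_one (cexp (k * I * (-π : ℝ))), ← exp_int_mul_two_pi_mul_I k,
        ← Complex.exp_add]
      congr 1
      push_cast
      ring
    rw [integral_exp_mul_complex hkI, hperiod, sub_self, zero_div]

theorem integral_exp_neg_pow_mul_exp_pow (n m : ℕ) :
    ∫ t in (-π)..π, cexp (-(I * t)) ^ n * cexp (I * t) ^ m =
      if n = m then ((2 * π : ℝ) : ℂ) else 0 := by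
  have hintegrand : ∀ t : ℝ,
      cexp (-(I * t)) ^ n * cexp (I * t) ^ m = cexp (((m - n : ℤ) : ℂ) * I * t) := by
    intro t
    rw [← Complex.exp_nat_mul, ← Complex.exp_nat_mul, ← Complex.exp_add]
    congr 1
    push_cast
    ring
  simp_rw [hintegrand, integral_exp_int_mul_I, sub_eq_zero, Nat.cast_inj, eq_comm]

theorem norm_exp_neg_I_mul_ofReal (t : ℝ) : ‖cexp (-(I * t))‖ = 1 := by
  rw [← mul_neg, ← ofReal_neg, norm_exp_I_mul_ofReal]

theorem integral_tsum_exp_neg_pow_mul_tsum_exp_pow (a b : ℕ → ℂ)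
    (ha : Summable fun n => ‖a n‖) (hb : Summable fun n => ‖b n‖) :
    ∫ t in (-π)..π, (∑' n, a n * cexp (-(I * t)) ^ n) * ∑' m, b m * cexp (I * t) ^ m =
      ((2 * π : ℝ) : ℂ) * ∑' n, a n * b n := by
  set integrand : ℝ → ℂ := fun t =>
    (∑' n, a n * cexp (-(I * t)) ^ n) * ∑' m, b m * cexp (I * t) ^ m
  set term : ℕ × ℕ → ℝ → ℂ := fun p t =>
    a p.1 * cexp (-(I * t)) ^ p.1 * (b p.2 * cexp (I * t) ^ p.2)
  have hsum_term : ∀ t : ℝ, HasSum (term · t) (integrand t) := by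
    intro t
    have ha' : Summable fun n => ‖a n * cexp (-(I * t)) ^ n‖ := by
      simpa [norm_exp_neg_I_mul_ofReal] using ha
    have hb' : Summable fun m => ‖b m * cexp (I * t) ^ m‖ := by
      simpa [norm_exp_I_mul_ofReal] using hb
    rw [show integrand t = _ from tsum_mul_tsum_of_summable_norm ha' hb']
    exact (summable_mul_of_summable_norm ha' hb').hasSum
  have hintegral_term : HasSum (fun p => ∫ t in (-π)..π, term p t)
      (∫ t in (-π)..π, integrand t) := by
    refine intervalIntegral.hasSum_integral_of_dominated_convergence
      (fun p _ => ‖a p.1‖ * ‖b p.2‖)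
      (fun p => (by fun_prop : Continuous (term p)).aestronglyMeasurable)
      (fun p => .of_forall fun t _ => by
        simp [term, norm_exp_I_mul_ofReal, norm_exp_neg_I_mul_ofReal])
      (.of_forall fun _ _ => ha.mul_of_nonneg hb (fun _ => norm_nonneg _) fun _ => norm_nonneg _)
      intervalIntegrable_const (.of_forall fun t _ => hsum_term t)
  have hintegral_term_eq : ∀ p : ℕ × ℕ, ∫ t in (-π)..π, term p t =
      a p.1 * b p.2 * if p.1 = p.2 then ((2 * π : ℝ) : ℂ) else 0 := by
    intro p
    simp_rw [term, mul_mul_mul_comm (a p.1), intervalIntegral.integral_const_mul,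
      integral_exp_neg_pow_mul_exp_pow]
  have hdiagonal : HasSum (fun n => a n * b n * ((2 * π : ℝ) : ℂ))
      (∫ t in (-π)..π, integrand t) := by
    refine ((Function.Injective.hasSum_iff (g := fun n => (n, n))
      (fun _ _ h => (Prod.ext_iff.mp h).1) fun p hp => ?_).mpr hintegral_term).congr_fun ?_
    · rw [hintegral_term_eq, if_neg fun h => hp ⟨p.1, Prod.ext rfl h⟩, mul_zero]
    · intro n
      simp [hintegral_term_eq]
  rw [← hdiagonal.tsum_eq, tsum_mul_right, mul_comm]

end

/-- If `∑ ‖f n‖ ‖z‖^n` converges, then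
`∑_{n≥0} f_n z^n / (2^n n!) = (1/(2π)) ∫_{-π}^{π} F(z e^{-it}) e^{(1/2) e^{it}} dt`,
where `F(w) = ∑_{n≥0} f_n w^n`. -/
theorem double_factorial_integral_formula (f : ℕ → ℂ) (z : ℂ)
    (hsum : Summable (fun n : ℕ => ‖f n‖ * ‖z‖ ^ n)) :
    ∑' n : ℕ, f n * z ^ n / ((2 : ℂ) ^ n * n.factorial) =
      ((2 * Real.pi : ℝ) : ℂ)⁻¹ *
        ∫ t in (-Real.pi)..Real.pi,
          (∑' n : ℕ, f n * (z * Complex.exp (-(Complex.I * (t : ℂ)))) ^ n) *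
            Complex.exp ((1 / 2 : ℂ) * Complex.exp (Complex.I * (t : ℂ))) := by
  have hexp : ∀ w : ℂ, Complex.exp ((1 / 2 : ℂ) * w) =
      ∑' m : ℕ, (1 / 2 : ℂ) ^ m / m.factorial * w ^ m := fun w => by
    simp_rw [Complex.exp_eq_exp_ℂ, NormedSpace.exp_eq_tsum_div, mul_pow, div_mul_eq_mul_div]
  have hpow : ∀ w : ℂ, ∑' n : ℕ, f n * (z * w) ^ n = ∑' n : ℕ, f n * z ^ n * w ^ n :=
    fun w => tsum_congr fun n => by rw [mul_pow, mul_assoc]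
  have ha : Summable fun n => ‖f n * z ^ n‖ := by simpa using hsum
  have hb : Summable fun m => ‖(1 / 2 : ℂ) ^ m / m.factorial‖ := by
    simpa using Real.summable_pow_div_factorial (1 / 2)
  simp_rw [hexp, hpow]
  rw [integral_tsum_exp_neg_pow_mul_tsum_exp_pow _ _ ha hb,
    inv_mul_cancel_left₀ (by simp [Real.pi_ne_zero])]
  refine tsum_congr fun n => ?_
  rw [one_div, inv_pow]
  field_simp
end

section
/- Let f : ℕ → ℂ and let z ∈ ℂ be such that the series ∑_{n≥0} |f_n| |z|^n converges. Then the Laplace–Borel transform recovers the ordinary generating function from the exponential generating function: ∫_{0}^{∞} F̂(t z) e^{-t} dt = ∑_{n≥0} f_n z^n, where F̂(w) = ∑_{n≥0} f_n w^n / n! (which converges for every w ∈ ℂ under the stated hypothesis). -/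
/-!
Expand the Borel transform termwise: since `∫₀^∞ tⁿ e^{-t} dt = Γ(n + 1) = n!`, the `n`-th term
integrates back to `aₙ`, and exchanging sum and integral is legitimate because the integrals of
the norms of the terms are exactly `‖aₙ‖`, a summable sequence (here `aₙ = fₙ zⁿ`).
-/

open MeasureTheory Set Real Nat

theorem integrableOn_pow_mul_exp_neg_Ioi (n : ℕ) :
    IntegrableOn (fun t : ℝ => t ^ n * exp (-t)) (Ioi 0) := by
  refine (GammaIntegral_convergent (s := n + 1) (by positivity)).congr_fun (fun t _ => ?_)
    measurableSet_Ioi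
  dsimp only
  rw [add_sub_cancel_right, rpow_natCast, mul_comm]

theorem integral_pow_mul_exp_neg_Ioi (n : ℕ) :
    ∫ t in Ioi (0 : ℝ), t ^ n * exp (-t) = n ! := by
  rw [← Gamma_nat_eq_factorial, Gamma_eq_integral (by positivity)]
  refine setIntegral_congr_fun measurableSet_Ioi (fun t _ => ?_)
  rw [add_sub_cancel_right, rpow_natCast, mul_comm]

theorem integral_pow_mul_exp_neg_div_factorial_Ioi (n : ℕ) :
    ∫ t in Ioi (0 : ℝ), t ^ n * exp (-t) / n ! = 1 := by
  rw [integral_div, integral_pow_mul_exp_neg_Ioi, div_self (by positivity)]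

section

variable {E : Type*} [NormedAddCommGroup E] [NormedSpace ℝ E] [CompleteSpace E]

theorem integral_exp_neg_smul_tsum_pow_div_factorial_smul {a : ℕ → E}
    (ha : Summable fun n => ‖a n‖) :
    ∫ t in Ioi (0 : ℝ), exp (-t) • ∑' n, (t ^ n / n !) • a n = ∑' n, a n := by
  set term : ℕ → ℝ → E := fun n t => (t ^ n * exp (-t) / n !) • a n
  have h_integrable (n : ℕ) : Integrable (term n) (volume.restrict (Ioi 0)) :=
    ((integrableOn_pow_mul_exp_neg_Ioi n).div_const _).smul_const _
  have h_integral_norm (n : ℕ) : ∫ t in Ioi (0 : ℝ), ‖term n t‖ = ‖a n‖ := by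
    have h_norm : EqOn (fun t => ‖term n t‖) (fun t => t ^ n * exp (-t) / n ! * ‖a n‖) (Ioi 0) :=
      fun t (ht : 0 < t) => by
        dsimp only [term]
        rw [norm_smul, Real.norm_of_nonneg (by positivity)]
    rw [setIntegral_congr_fun measurableSet_Ioi h_norm, integral_mul_const,
      integral_pow_mul_exp_neg_div_factorial_Ioi, one_mul]
  calc ∫ t in Ioi (0 : ℝ), exp (-t) • ∑' n, (t ^ n / n !) • a n
      = ∫ t in Ioi (0 : ℝ), ∑' n, term n t := by
        congr 1 with t
        rw [← tsum_const_smul'']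
        congr 1 with n
        rw [smul_smul, mul_div_assoc', mul_comm]
    _ = ∑' n, ∫ t in Ioi (0 : ℝ), term n t :=
        (integral_tsum_of_summable_integral_norm h_integrable
          (by simpa only [h_integral_norm] using ha)).symm
    _ = ∑' n, a n := by
        simp only [term, integral_smul_const, integral_pow_mul_exp_neg_div_factorial_Ioi, one_smul]

end

/-- Laplace–Borel transform: if `∑ ‖f n‖ ‖z‖^n` converges, then
`∫_0^∞ F̂(t z) e^{-t} dt = ∑_{n≥0} f_n z^n`, where `F̂(w) = ∑_{n≥0} f_n w^n / n!`. -/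
theorem laplace_borel_transform (f : ℕ → ℂ) (z : ℂ)
    (hsum : Summable (fun n : ℕ => ‖f n‖ * ‖z‖ ^ n)) :
    (∫ t in Set.Ioi (0 : ℝ),
        (∑' n : ℕ, f n * ((t : ℂ) * z) ^ n / n.factorial) * (Real.exp (-t) : ℂ)) =
      ∑' n : ℕ, f n * z ^ n := by
  have h_abs : Summable fun n => ‖f n * z ^ n‖ := by simpa only [norm_mul, norm_pow] using hsum
  rw [← integral_exp_neg_smul_tsum_pow_div_factorial_smul h_abs]
  congr 1 with t
  rw [Complex.real_smul, mul_comm]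
  refine congrArg _ (tsum_congr fun n => ?_)
  rw [Complex.real_smul]
  push_cast
  ring
end

section
/- Let r ≥ 1 be an integer, let f : ℕ → ℂ, and let z ∈ ℂ be such that the series ∑_{n≥0} |f_n| |z|^n converges. Then ∑_{n≥0} f_n z^n / (n+1)^r = ((-1)^{r-1} / (r-1)!) ∫_{0}^{1} (log t)^{r-1} · F(t z) dt, where F(w) = ∑_{n≥0} f_n w^n and log denotes the real natural logarithm. -/
open MeasureTheory intervalIntegral
open Set Real
open scoped Nat

/-! Expanding `F(tz) = ∑ fₙ tⁿ zⁿ` and integrating term by term reduces the formula to the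
moments `∫₀¹ tⁿ (-log t)ᵏ dt = k! / (n+1)^(k+1)`, which the substitution `t = e^{-u}` turns into
the Gamma integral `∫₀^∞ uᵏ e^{-(n+1)u} du`. The interchange of sum and integral is justified by
absolute convergence: the integrand `tⁿ (-log t)ᵏ` is nonnegative with integral at most `k!`, and
`∑ ‖fₙ‖ ‖z‖ⁿ < ∞`. -/

section Substitution

variable {E : Type*} [NormedAddCommGroup E] [NormedSpace ℝ E]

lemma image_exp_neg_Ioi_zero : (fun x : ℝ ↦ exp (-x)) '' Ioi 0 = Ioo 0 1 := by
  ext y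
  constructor
  · rintro ⟨x, hx, rfl⟩
    exact ⟨exp_pos _, exp_lt_one_iff.mpr (neg_lt_zero.mpr hx)⟩
  · rintro ⟨hy0, hy1⟩
    exact ⟨-log y, neg_pos.mpr (log_neg hy0 hy1), by simp [exp_log hy0]⟩

lemma hasDerivAt_exp_neg (x : ℝ) : HasDerivAt (fun x ↦ exp (-x)) (-exp (-x)) x := by
  simpa using ((hasDerivAt_neg x).exp)

theorem integral_comp_exp_neg_Ioi (g : ℝ → E) :
    ∫ x in Ioi 0, exp (-x) • g (exp (-x)) = ∫ y in Ioo 0 1, g y := by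
  rw [← image_exp_neg_Ioi_zero]
  simpa [abs_of_pos (exp_pos _)] using (integral_image_eq_integral_abs_deriv_smul
    measurableSet_Ioi (fun x _ ↦ (hasDerivAt_exp_neg x).hasDerivWithinAt)
    (fun x _ y _ hxy ↦ neg_injective (exp_injective hxy)) g).symm

theorem integrableOn_comp_exp_neg_Ioi (g : ℝ → E) :
    IntegrableOn (fun x ↦ exp (-x) • g (exp (-x))) (Ioi 0) ↔ IntegrableOn g (Ioo 0 1) := by
  rw [← image_exp_neg_Ioi_zero]
  simpa [abs_of_pos (exp_pos _)] using (integrableOn_image_iff_integrableOn_abs_deriv_smul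
    measurableSet_Ioi (fun x _ ↦ (hasDerivAt_exp_neg x).hasDerivWithinAt)
    (fun x _ y _ hxy ↦ neg_injective (exp_injective hxy)) g).symm

end Substitution

theorem integral_pow_mul_exp_neg_mul_Ioi (k : ℕ) {c : ℝ} (hc : 0 < c) :
    ∫ u in Ioi 0, u ^ k * exp (-(c * u)) = k ! / c ^ (k + 1) := by
  have h := integral_rpow_mul_exp_neg_mul_Ioi (a := k + 1) (by positivity) hc
  rw [add_sub_cancel_right, Gamma_nat_eq_factorial, ← Nat.cast_succ, rpow_natCast] at h
  simp_rw [rpow_natCast] at h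
  rw [h, one_div_pow, one_div_mul_eq_div]

theorem integrableOn_pow_mul_exp_neg_mul_Ioi (k : ℕ) {c : ℝ} (hc : 0 < c) :
    IntegrableOn (fun u ↦ u ^ k * exp (-(c * u))) (Ioi 0) := by
  simpa [rpow_natCast] using integrableOn_rpow_mul_exp_neg_mul_rpow (s := k) (p := 1)
    (neg_one_lt_zero.trans_le k.cast_nonneg) one_pos hc

lemma exp_neg_mul_pow_mul_neg_log_pow (n k : ℕ) (u : ℝ) :
    exp (-u) • (exp (-u) ^ n * (-log (exp (-u))) ^ k) = u ^ k * exp (-((n + 1) * u)) := by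
  rw [log_exp, neg_neg, smul_eq_mul, ← exp_nat_mul, mul_left_comm, ← mul_assoc, ← exp_add]
  ring_nf

lemma pow_mul_neg_log_pow_nonneg (n k : ℕ) {t : ℝ} (ht : t ∈ Ioo 0 1) :
    0 ≤ t ^ n * (-log t) ^ k :=
  mul_nonneg (pow_nonneg ht.1.le n) (pow_nonneg (neg_nonneg.mpr (log_nonpos ht.1.le ht.2.le)) k)

theorem integral_pow_mul_neg_log_pow_Ioo (n k : ℕ) :
    ∫ t in Ioo 0 1, t ^ n * (-log t) ^ k = k ! / (n + 1) ^ (k + 1) := by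
  rw [← integral_comp_exp_neg_Ioi]
  simp_rw [exp_neg_mul_pow_mul_neg_log_pow]
  exact integral_pow_mul_exp_neg_mul_Ioi k (by positivity)

theorem integrableOn_pow_mul_neg_log_pow_Ioo (n k : ℕ) :
    IntegrableOn (fun t ↦ t ^ n * (-log t) ^ k) (Ioo 0 1) := by
  rw [← integrableOn_comp_exp_neg_Ioi]
  simp_rw [exp_neg_mul_pow_mul_neg_log_pow]
  exact integrableOn_pow_mul_exp_neg_mul_Ioi k (by positivity)

theorem integral_tsum_smul_of_nonneg {α E : Type*} [MeasurableSpace α] {μ : Measure α}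
    [NormedAddCommGroup E] [NormedSpace ℝ E] [CompleteSpace E] {g : ℕ → α → ℝ} {c : ℕ → E}
    (hg : ∀ n, Integrable (g n) μ) (hg_nonneg : ∀ n, 0 ≤ᵐ[μ] g n)
    (hsum : Summable fun n ↦ (∫ x, g n x ∂μ) * ‖c n‖) :
    ∫ x, ∑' n, g n x • c n ∂μ = ∑' n, (∫ x, g n x ∂μ) • c n := by
  have hnorm : ∀ n, ∫ x, ‖g n x • c n‖ ∂μ = (∫ x, g n x ∂μ) * ‖c n‖ := fun n ↦ by
    rw [← MeasureTheory.integral_mul_const]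
    refine integral_congr_ae ((hg_nonneg n).mono fun x hx ↦ ?_)
    simp only [norm_smul, Real.norm_of_nonneg hx]
  rw [← integral_tsum_of_summable_integral_norm (fun n ↦ (hg n).smul_const (c n))
    (by simpa only [hnorm] using hsum)]
  simp_rw [_root_.integral_smul_const]

/-- For an integer `r ≥ 1`: if `∑ ‖f n‖ ‖z‖^n` converges, then
`∑_{n≥0} f_n z^n/(n+1)^r = ((-1)^(r-1)/(r-1)!) ∫_0^1 (log t)^(r-1) F(t z) dt`,
where `F(w) = ∑_{n≥0} f_n w^n`. -/
theorem polylog_like_integral_formula (r : ℕ) (hr : 1 ≤ r) (f : ℕ → ℂ) (z : ℂ)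
    (hsum : Summable (fun n : ℕ => ‖f n‖ * ‖z‖ ^ n)) :
    ∑' n : ℕ, f n * z ^ n / ((n : ℂ) + 1) ^ r =
      ((-1 : ℂ) ^ (r - 1) / ((r - 1).factorial : ℂ)) *
        ∫ t in (0 : ℝ)..1,
          ((Real.log t : ℂ)) ^ (r - 1) * ∑' n : ℕ, f n * ((t : ℂ) * z) ^ n := by
  obtain ⟨k, rfl⟩ : ∃ k, r = k + 1 := ⟨r - 1, by omega⟩
  rw [Nat.add_sub_cancel]
  have hsign : ((-1 : ℂ) ^ k) ^ 2 = 1 := by rw [← pow_mul, pow_mul', neg_one_sq, one_pow]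
  have hintegrand : ∀ t : ℝ, (log t : ℂ) ^ k * ∑' n, f n * (t * z) ^ n =
      (-1) ^ k * ∑' n, (t ^ n * (-log t) ^ k) • (f n * z ^ n) := fun t ↦ by
    simp_rw [← tsum_mul_left, Complex.real_smul]
    refine tsum_congr fun n ↦ ?_
    push_cast
    rw [neg_pow, mul_pow]
    linear_combination (-(f n * z ^ n * t ^ n * (log t : ℂ) ^ k)) * hsign
  have hnonneg : ∀ n, 0 ≤ᵐ[volume.restrict (Ioo 0 1)] fun t : ℝ ↦ t ^ n * (-log t) ^ k :=
    fun n ↦ (ae_restrict_iff' measurableSet_Ioo).mpr <|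
      .of_forall fun _ ↦ pow_mul_neg_log_pow_nonneg n k
  have hsummable : Summable fun n ↦
      (∫ t in Ioo 0 1, t ^ n * (-log t) ^ k) * ‖f n * z ^ n‖ := by
    refine (hsum.mul_left (k ! : ℝ)).of_nonneg_of_le
      (fun n ↦ by rw [integral_pow_mul_neg_log_pow_Ioo]; positivity) fun n ↦ ?_
    rw [integral_pow_mul_neg_log_pow_Ioo, norm_mul, norm_pow]
    gcongr
    exact div_le_self (by positivity) (one_le_pow₀ (by simp))
  rw [integral_of_le zero_le_one, integral_Ioc_eq_integral_Ioo, funext hintegrand,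
    MeasureTheory.integral_const_mul, integral_tsum_smul_of_nonneg
      (fun n ↦ integrableOn_pow_mul_neg_log_pow_Ioo n k) hnonneg hsummable,
    ← tsum_mul_left, ← tsum_mul_left]
  refine tsum_congr fun n ↦ ?_
  rw [integral_pow_mul_neg_log_pow_Ioo, Complex.real_smul]
  push_cast
  have hfac : (k ! : ℂ) ≠ 0 := Nat.cast_ne_zero.mpr k.factorial_ne_zero
  field_simp
  rw [hsign, mul_one]
end

section
/- Let q be a real number with 0 < q < 1, let f : ℕ → ℂ, and let z ∈ ℂ be such that the series ∑_{n≥0} |f_n| |z|^n converges. Then the square series transformation holds: ∑_{n≥0} f_n q^{n^2} z^n = (1/√(2π)) ∫_{0}^{∞} e^{-t^2/2} · [ F(z e^{i t √(2 ln(1/q))}) + F(z e^{-i t √(2 ln(1/q))}) ] dt, where F(w) = ∑_{n≥0} f_n w^n and ln denotes the real natural logarithm. -/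
open MeasureTheory

open Complex

lemma gauss_integrable (a : ℝ) :
    Integrable (fun t : ℝ => ((Real.exp (-t ^ 2 / 2) : ℝ) : ℂ) *
      (Complex.exp (Complex.I * a * t) + Complex.exp (-(Complex.I * a * t)))) := by
  have hre : (0:ℝ) < ((1/2 : ℂ)).re := by norm_num
  have hint1 : Integrable (fun t : ℝ => Complex.exp (I * a * t) * Complex.exp (-(1/2 : ℂ) * t ^ 2)) := by
    refine (integrable_cexp_quadratic hre (I * a) 0).congr
      (Filter.Eventually.of_forall fun t => ?_)
    dsimp only
    rw [← Complex.exp_add]; congr 1; ring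
  have hint2 : Integrable (fun t : ℝ => Complex.exp (I * (-(a:ℂ)) * t) * Complex.exp (-(1/2 : ℂ) * t ^ 2)) := by
    refine (integrable_cexp_quadratic hre (I * (-(a:ℂ))) 0).congr
      (Filter.Eventually.of_forall fun t => ?_)
    dsimp only
    rw [← Complex.exp_add]; congr 1; ring
  refine (hint1.add hint2).congr (Filter.Eventually.of_forall fun t => ?_)
  have h1 : ((Real.exp (-t ^ 2 / 2) : ℝ) : ℂ) = Complex.exp (-(1/2:ℂ) * t ^ 2) := by
    rw [Complex.ofReal_exp]; congr 1; push_cast; ring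
  have h2 : I * (-(a:ℂ)) * t = -(I * a * t) := by ring
  simp only [Pi.add_apply]
  rw [h1, h2]
  ring

lemma gauss_aux (a : ℝ) :
    ∫ t in Set.Ioi (0:ℝ), ((Real.exp (-t ^ 2 / 2) : ℝ) : ℂ) *
      (Complex.exp (Complex.I * a * t) + Complex.exp (-(Complex.I * a * t))) =
      ((Real.sqrt (2 * Real.pi) : ℝ) : ℂ) * Complex.exp (-((a : ℂ)) ^ 2 / 2) := by
  set h : ℝ → ℂ := fun t => ((Real.exp (-t ^ 2 / 2) : ℝ) : ℂ) *
      (Complex.exp (Complex.I * a * t) + Complex.exp (-(Complex.I * a * t))) with hh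
  have hre : (0:ℝ) < ((1/2 : ℂ)).re := by norm_num
  have hint1 : Integrable (fun t : ℝ => Complex.exp (I * a * t) * Complex.exp (-(1/2 : ℂ) * t ^ 2)) := by
    refine (integrable_cexp_quadratic hre (I * a) 0).congr
      (Filter.Eventually.of_forall fun t => ?_)
    dsimp only
    rw [← Complex.exp_add]; congr 1; ring
  have hint2 : Integrable (fun t : ℝ => Complex.exp (I * (-(a:ℂ)) * t) * Complex.exp (-(1/2 : ℂ) * t ^ 2)) := by
    refine (integrable_cexp_quadratic hre (I * (-(a:ℂ))) 0).congr
      (Filter.Eventually.of_forall fun t => ?_)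
    dsimp only
    rw [← Complex.exp_add]; congr 1; ring
  have hfun : ∀ t : ℝ, h t =
      Complex.exp (I * a * t) * Complex.exp (-(1/2 : ℂ) * t ^ 2)
        + Complex.exp (I * (-(a:ℂ)) * t) * Complex.exp (-(1/2 : ℂ) * t ^ 2) := by
    intro t
    have h1 : ((Real.exp (-t ^ 2 / 2) : ℝ) : ℂ) = Complex.exp (-(1/2:ℂ) * t ^ 2) := by
      rw [Complex.ofReal_exp]; congr 1; push_cast; ring
    have h2 : I * (-(a:ℂ)) * t = -(I * a * t) := by ring
    rw [hh]; dsimp only; rw [h1, h2]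
    ring
  have hinth : Integrable h :=
    (hint1.add hint2).congr (Filter.Eventually.of_forall fun t => (hfun t).symm)
  have heven : ∀ t : ℝ, h (-t) = h t := by
    intro t
    simp only [hh]
    push_cast
    ring_nf
  have hwhole : ∫ t : ℝ, h t =
      ((Real.sqrt (2 * Real.pi) : ℝ) : ℂ) * (2 * Complex.exp (-((a : ℂ)) ^ 2 / 2)) := by
    rw [integral_congr_ae (Filter.Eventually.of_forall hfun), integral_add hint1 hint2,
      fourierIntegral_gaussian hre (a : ℂ), fourierIntegral_gaussian hre (-(a : ℂ))]
    have h2pi : ((Real.sqrt (2 * Real.pi) : ℝ) : ℂ) = ((Real.pi : ℂ) / (1/2)) ^ (1/2 : ℂ) := by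
      rw [Real.sqrt_eq_rpow, Complex.ofReal_cpow (by positivity)]
      push_cast
      ring_nf
    rw [h2pi]
    norm_num [neg_sq]
    ring
  have hIic : ∫ t in Set.Iic (0:ℝ), h t = ∫ t in Set.Ioi (0:ℝ), h t := by
    have := integral_comp_neg_Iic (0:ℝ) h
    rw [neg_zero] at this
    rw [← this]
    exact setIntegral_congr_fun measurableSet_Iic fun t _ => (heven t).symm
  have hsplit := intervalIntegral.integral_Iic_add_Ioi (b := (0:ℝ)) hinth.integrableOn hinth.integrableOn
  rw [hIic] at hsplit
  have key : (2:ℂ) * ∫ t in Set.Ioi (0:ℝ), h t =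
      ((Real.sqrt (2 * Real.pi) : ℝ) : ℂ) * (2 * Complex.exp (-((a : ℂ)) ^ 2 / 2)) := by
    rw [← hwhole, ← hsplit]; ring
  linear_combination key / 2

/-- Square series transformation: for real `0 < q < 1`, if `∑ ‖f n‖ ‖z‖^n` converges, then
`∑_{n≥0} f_n q^(n²) z^n
  = (1/√(2π)) ∫_0^∞ e^{-t²/2} [F(z e^{it√(2 ln(1/q))}) + F(z e^{-it√(2 ln(1/q))})] dt`,
where `F(w) = ∑_{n≥0} f_n w^n`. -/
theorem square_series_transformation (q : ℝ) (hq0 : 0 < q) (hq1 : q < 1)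
    (f : ℕ → ℂ) (z : ℂ) (hsum : Summable (fun n : ℕ => ‖f n‖ * ‖z‖ ^ n)) :
    ∑' n : ℕ, f n * ((q ^ (n ^ 2) : ℝ) : ℂ) * z ^ n =
      ((Real.sqrt (2 * Real.pi) : ℝ) : ℂ)⁻¹ *
        ∫ t in Set.Ioi (0 : ℝ),
          ((Real.exp (-t ^ 2 / 2) : ℝ) : ℂ) *
            ((∑' n : ℕ, f n *
                (z * Complex.exp (Complex.I * (t : ℂ) *
                  ((Real.sqrt (2 * Real.log (1 / q)) : ℝ) : ℂ))) ^ n) +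
              ∑' n : ℕ, f n *
                (z * Complex.exp (-(Complex.I * (t : ℂ) *
                  ((Real.sqrt (2 * Real.log (1 / q)) : ℝ) : ℂ)))) ^ n) := by
  have hlog : 0 ≤ Real.log (1 / q) := Real.log_nonneg (by rw [le_div_iff₀ hq0]; linarith)
  set c : ℝ := Real.sqrt (2 * Real.log (1 / q)) with hc
  have hc2 : c ^ 2 = -(2 * Real.log q) := by
    rw [hc, Real.sq_sqrt (by positivity), one_div, Real.log_inv]
    ring
  -- the summands after expansion
  set g : ℕ → ℝ → ℂ := fun n t => (f n * z ^ n) *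
      (((Real.exp (-t ^ 2 / 2) : ℝ) : ℂ) *
        (Complex.exp (I * (((n : ℝ) * c : ℝ) : ℂ) * t) +
          Complex.exp (-(I * (((n : ℝ) * c : ℝ) : ℂ) * t)))) with hg
  have hnorm1 : ∀ x y : ℝ, ‖Complex.exp (I * (x : ℂ) * (y : ℂ))‖ = 1 := by
    intro x y
    simp [Complex.norm_exp]
  have hnorm2 : ∀ x y : ℝ, ‖Complex.exp (-(I * (x : ℂ) * (y : ℂ)))‖ = 1 := by
    intro x y
    rw [← neg_mul, ← neg_mul, show -I * (x:ℂ) = I * ((-x : ℝ) : ℂ) by push_cast; ring]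
    exact hnorm1 _ _
  have hsp : ∀ t : ℝ, Summable fun n : ℕ =>
      f n * z ^ n * Complex.exp (I * (((n : ℝ) * c : ℝ) : ℂ) * t) := by
    intro t
    refine Summable.of_norm (Summable.congr hsum fun n => ?_)
    rw [norm_mul, norm_mul, norm_pow, hnorm1, mul_one]
  have hsm : ∀ t : ℝ, Summable fun n : ℕ =>
      f n * z ^ n * Complex.exp (-(I * (((n : ℝ) * c : ℝ) : ℂ) * t)) := by
    intro t
    refine Summable.of_norm (Summable.congr hsum fun n => ?_)
    rw [norm_mul, norm_mul, norm_pow, hnorm2, mul_one]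
  have hEq : ∀ t : ℝ,
      ((Real.exp (-t ^ 2 / 2) : ℝ) : ℂ) *
        ((∑' n : ℕ, f n * (z * Complex.exp (I * (t : ℂ) * (c : ℂ))) ^ n) +
          ∑' n : ℕ, f n * (z * Complex.exp (-(I * (t : ℂ) * (c : ℂ)))) ^ n) =
        ∑' n : ℕ, g n t := by
    intro t
    have hplus : (∑' n : ℕ, f n * (z * Complex.exp (I * (t : ℂ) * (c : ℂ))) ^ n) =
        ∑' n : ℕ, f n * z ^ n * Complex.exp (I * (((n : ℝ) * c : ℝ) : ℂ) * t) := by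
      refine tsum_congr fun n => ?_
      rw [mul_pow, ← Complex.exp_nat_mul, ← mul_assoc,
        show ((n : ℂ) * (I * (t : ℂ) * (c : ℂ))) = I * (((n : ℝ) * c : ℝ) : ℂ) * t by
          push_cast; ring]
    have hminus : (∑' n : ℕ, f n * (z * Complex.exp (-(I * (t : ℂ) * (c : ℂ)))) ^ n) =
        ∑' n : ℕ, f n * z ^ n * Complex.exp (-(I * (((n : ℝ) * c : ℝ) : ℂ) * t)) := by
      refine tsum_congr fun n => ?_
      rw [mul_pow, ← Complex.exp_nat_mul, ← mul_assoc,
        show ((n : ℂ) * (-(I * (t : ℂ) * (c : ℂ)))) = -(I * (((n : ℝ) * c : ℝ) : ℂ) * t) by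
          push_cast; ring]
    rw [hplus, hminus, ← Summable.tsum_add (hsp t) (hsm t), ← tsum_mul_left]
    exact tsum_congr fun n => by rw [hg]; ring
  have hgint : ∀ n : ℕ, Integrable (g n) (volume.restrict (Set.Ioi (0:ℝ))) := fun n =>
    ((gauss_integrable ((n : ℝ) * c)).integrableOn).const_mul _
  have hC : Integrable (fun t : ℝ => 2 * Real.exp (-t ^ 2 / 2))
      (volume.restrict (Set.Ioi (0:ℝ))) := by
    refine (((integrable_exp_neg_mul_sq (by norm_num : (0:ℝ) < 1/2)).const_mul 2).congr
      (Filter.Eventually.of_forall fun t => ?_)).integrableOn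
    dsimp only; congr 2; ring
  set C : ℝ := ∫ t in Set.Ioi (0:ℝ), 2 * Real.exp (-t ^ 2 / 2) with hCdef
  have hCnn : 0 ≤ C := integral_nonneg fun t => by positivity
  have hnormg : ∀ n t, ‖g n t‖ ≤ ‖f n‖ * ‖z‖ ^ n * (2 * Real.exp (-t ^ 2 / 2)) := by
    intro n t
    rw [hg]
    dsimp only
    rw [norm_mul, norm_mul, norm_mul, norm_pow]
    have h1 : ‖((Real.exp (-t ^ 2 / 2) : ℝ) : ℂ)‖ = Real.exp (-t ^ 2 / 2) := by
      rw [Complex.norm_real, Real.norm_of_nonneg (Real.exp_nonneg _)]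
    have h2 : ‖Complex.exp (I * (((n : ℝ) * c : ℝ) : ℂ) * t) +
        Complex.exp (-(I * (((n : ℝ) * c : ℝ) : ℂ) * t))‖ ≤ 2 := by
      refine (norm_add_le _ _).trans ?_
      rw [hnorm1, hnorm2]; norm_num
    calc ‖f n‖ * ‖z‖ ^ n * (‖((Real.exp (-t ^ 2 / 2) : ℝ) : ℂ)‖ * ‖_‖)
        ≤ ‖f n‖ * ‖z‖ ^ n * (Real.exp (-t ^ 2 / 2) * 2) := by
          rw [h1]
          gcongr
      _ = ‖f n‖ * ‖z‖ ^ n * (2 * Real.exp (-t ^ 2 / 2)) := by ring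
  have hsumint : Summable fun n : ℕ => ∫ t in Set.Ioi (0:ℝ), ‖g n t‖ := by
    refine Summable.of_nonneg_of_le (fun n => integral_nonneg fun t => norm_nonneg _)
      (fun n => ?_) (hsum.mul_right C)
    calc (∫ t in Set.Ioi (0:ℝ), ‖g n t‖)
        ≤ ∫ t in Set.Ioi (0:ℝ), ‖f n‖ * ‖z‖ ^ n * (2 * Real.exp (-t ^ 2 / 2)) :=
          integral_mono_of_nonneg (Filter.Eventually.of_forall fun t => norm_nonneg _)
            ((hC.const_mul _)) (Filter.Eventually.of_forall fun t => hnormg n t)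
      _ = ‖f n‖ * ‖z‖ ^ n * C := by rw [integral_const_mul]
  have hswap : (∫ t in Set.Ioi (0:ℝ), ∑' n : ℕ, g n t) =
      ∑' n : ℕ, ∫ t in Set.Ioi (0:ℝ), g n t :=
    (integral_tsum_of_summable_integral_norm hgint hsumint).symm
  have hval : ∀ n : ℕ, (∫ t in Set.Ioi (0:ℝ), g n t) =
      (f n * z ^ n) * (((Real.sqrt (2 * Real.pi) : ℝ) : ℂ) * ((q ^ (n ^ 2) : ℝ) : ℂ)) := by
    intro n
    rw [hg]
    dsimp only
    rw [integral_const_mul, gauss_aux ((n : ℝ) * c)]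
    congr 1
    congr 1
    have hre : Real.exp (-((n : ℝ) * c) ^ 2 / 2) = q ^ (n ^ 2) := by
      have hr : -((n : ℝ) * c) ^ 2 / 2 = ((n ^ 2 : ℕ) : ℝ) * Real.log q := by
        rw [mul_pow, hc2]; push_cast; ring
      rw [hr, Real.exp_nat_mul, Real.exp_log hq0]
    rw [show (-((((n : ℝ) * c : ℝ)) : ℂ) ^ 2 / 2) = ((-((n : ℝ) * c) ^ 2 / 2 : ℝ) : ℂ) by
      push_cast; ring, ← Complex.ofReal_exp, hre]
  have hsqrt_ne : ((Real.sqrt (2 * Real.pi) : ℝ) : ℂ) ≠ 0 := by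
    simp only [ne_eq, Complex.ofReal_eq_zero]
    positivity
  rw [integral_congr_ae (Filter.Eventually.of_forall hEq), hswap, tsum_congr hval,
    ← tsum_mul_left]
  refine tsum_congr fun n => ?_
  have hs : ((Real.sqrt (2 * Real.pi) : ℝ) : ℂ)⁻¹ * ((Real.sqrt (2 * Real.pi) : ℝ) : ℂ) = 1 :=
    inv_mul_cancel₀ hsqrt_ne
  linear_combination (-(f n * ((q ^ n ^ 2 : ℝ) : ℂ) * z ^ n)) * hs
end
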